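/- arXiv:1311.5681 — 7 statements merged into one kernel-verified Lean document; each statement's English description precedes it below -/
import Mathlib

section
/- (Theorem 1, decision-region characterization) Fix γ > 0, σ² > 0, integer M ≥ 1, powers 0 ≤ P_0 < P_1 < ⋯ < P_N and priors q_0,…,q_N > 0. For any i ∈ {0,…,N} and any observation x ∈ ℂ^M with energy y(x) = Σ_{l=1}^M |x_l|², one has q_i·p_{P_i}(x) > q_j·p_{P_j}(x) for all j ≠ i if and only if Θ(i,j) < y(x) for all j < i and y(x) < Θ(i,j) for all j > i; equivalently, the decision region of hypothesis H_i in the energy variable is the open interval (max_{j<i} Θ(i,j), min_{j>i} Θ(i,j)) (with max over the empty set read as −∞ and min over the empty set read as +∞). -/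
open Finset Real

/-- Theorem 1: the MAP decision region of hypothesis `H i` in the energy
variable is the open interval `(max_{j<i} Θ(i,j), min_{j>i} Θ(i,j))`. -/
theorem map_decision_region
    (γ σ2 : ℝ) (hγ : 0 < γ) (hσ : 0 < σ2) (M : ℕ) (hM : 1 ≤ M)
    (N : ℕ) (P : Fin (N + 1) → ℝ) (hP0 : 0 ≤ P 0) (hPmono : StrictMono P)
    (q : Fin (N + 1) → ℝ) (hq : ∀ i, 0 < q i)
    (p : ℝ → (Fin M → ℂ) → ℝ)
    (hp : ∀ (P' : ℝ) (x : Fin M → ℂ), p P' x = ∏ l, ((Real.pi * (γ * P' + σ2))⁻¹ *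
        Real.exp (-(‖x l‖) ^ 2 / (γ * P' + σ2))))
    (y : (Fin M → ℂ) → ℝ) (hy : ∀ x, y x = ∑ l, (‖x l‖) ^ 2)
    (Θ : Fin (N + 1) → Fin (N + 1) → ℝ)
    (hΘ : ∀ i j, Θ i j = ((γ * P i + σ2) * (γ * P j + σ2) / (γ * (P i - P j))) *
        Real.log (((γ * P i + σ2) / (γ * P j + σ2)) ^ M * (q j / q i)))
    (i : Fin (N + 1)) (x : Fin M → ℂ) :
    ((∀ j, j ≠ i → q i * p (P i) x > q j * p (P j) x) ↔
      ((∀ j, j < i → Θ i j < y x) ∧ (∀ j, i < j → y x < Θ i j))) := by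
  have hs : ∀ k : Fin (N+1), 0 < γ * P k + σ2 := by
    intro k
    have hPk : 0 ≤ P k := le_trans hP0 (hPmono.monotone (Fin.zero_le k))
    positivity
  have hqp : ∀ k : Fin (N+1), q k * p (P k) x =
      Real.exp (Real.log (q k) - M * Real.log (Real.pi * (γ * P k + σ2)) - y x / (γ * P k + σ2)) := by
    intro k
    have hsk := hs k
    have hπs : 0 < Real.pi * (γ * P k + σ2) := by positivity
    rw [hp, hy]
    rw [Finset.prod_mul_distrib, Finset.prod_const, ← Real.exp_sum]
    have h1 : ∑ l, -(‖x l‖) ^ 2 / (γ * P k + σ2)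
        = -(∑ l, (‖x l‖) ^ 2) / (γ * P k + σ2) := by
      rw [← Finset.sum_div, ← Finset.sum_neg_distrib]
    rw [h1]
    simp only [Finset.card_univ, Fintype.card_fin]
    rw [Real.exp_sub, Real.exp_sub, Real.exp_log (hq k)]
    rw [show (M : ℝ) * Real.log (Real.pi * (γ * P k + σ2))
        = Real.log ((Real.pi * (γ * P k + σ2)) ^ M) by rw [Real.log_pow]]
    rw [Real.exp_log (pow_pos hπs M)]
    rw [neg_div, Real.exp_neg]
    rw [inv_pow]
    ring
  have key : ∀ j, j ≠ i → (q i * p (P i) x > q j * p (P j) x ↔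
      0 < (y x - Θ i j) * (γ * (P i - P j))) := by
    intro j hj
    have hsi := hs i
    have hsj := hs j
    have hd : γ * (P i - P j) ≠ 0 := by
      have : P i ≠ P j := fun h => hj (hPmono.injective h.symm)
      have : P i - P j ≠ 0 := sub_ne_zero.mpr this
      positivity
    rw [hqp i, hqp j, gt_iff_lt, Real.exp_lt_exp, ← sub_pos]
    have hdiff : (Real.log (q i) - M * Real.log (Real.pi * (γ * P i + σ2)) - y x / (γ * P i + σ2))
        - (Real.log (q j) - M * Real.log (Real.pi * (γ * P j + σ2)) - y x / (γ * P j + σ2))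
        = ((y x - Θ i j) * (γ * (P i - P j))) / ((γ * P i + σ2) * (γ * P j + σ2)) := by
      rw [hΘ]
      have hL : Real.log (((γ * P i + σ2) / (γ * P j + σ2)) ^ M * (q j / q i))
          = M * (Real.log (γ * P i + σ2) - Real.log (γ * P j + σ2))
            + (Real.log (q j) - Real.log (q i)) := by
        rw [Real.log_mul (pow_ne_zero M (div_pos hsi hsj).ne') (div_pos (hq j) (hq i)).ne', Real.log_pow,
            Real.log_div hsi.ne' hsj.ne', Real.log_div (hq j).ne' (hq i).ne']
      rw [hL, Real.log_mul Real.pi_ne_zero hsi.ne', Real.log_mul Real.pi_ne_zero hsj.ne']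
      have hd' : P i - P j ≠ 0 := fun h => hd (by rw [h, mul_zero])
      field_simp
      ring
    rw [hdiff]
    rw [div_pos_iff]
    constructor
    · rintro (⟨h, _⟩ | ⟨_, h⟩)
      · exact h
      · exact absurd (mul_pos hsi hsj) (by linarith)
    · intro h
      exact Or.inl ⟨h, mul_pos hsi hsj⟩
  constructor
  · intro h
    constructor
    · intro j hj
      have hd : 0 < γ * (P i - P j) := by
        have := hPmono hj; nlinarith
      have hk := (key j hj.ne).mp (h j hj.ne)
      rcases mul_pos_iff.mp hk with ⟨h1, _⟩ | ⟨_, h2⟩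
      · linarith
      · linarith
    · intro j hj
      have hd : γ * (P i - P j) < 0 := by
        have := hPmono hj; nlinarith
      have hk := (key j hj.ne').mp (h j hj.ne')
      rcases mul_pos_iff.mp hk with ⟨_, h2⟩ | ⟨h1, _⟩
      · linarith
      · linarith
  · rintro ⟨h1, h2⟩ j hj
    rcases lt_or_gt_of_ne hj with hlt | hgt
    · have hd : 0 < γ * (P i - P j) := by have := hPmono hlt; nlinarith
      exact (key j hj).mpr (mul_pos (by linarith [h1 j hlt]) hd)
    · have hd : γ * (P i - P j) < 0 := by have := hPmono hgt; nlinarith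
      exact (key j hj).mpr (mul_pos_of_neg_of_neg (by linarith [h2 j hgt]) hd)
end

section
/- (Lemma 1) Fix γ > 0, σ² > 0, integer M ≥ 1 and a power P > 0. The equal-prior threshold function Q ↦ Θ̃(P,Q) is strictly increasing on {Q ≥ 0 : Q ≠ P}: for all 0 ≤ Q < Q′ with Q ≠ P and Q′ ≠ P, one has Θ̃(P,Q) < Θ̃(P,Q′). -/
open Real

private lemma aux_hasDeriv (t : ℝ) (ht : 0 < t) (ht1 : t ≠ 1) :
    HasDerivAt (fun u : ℝ => u * Real.log u / (u - 1))
      ((t - 1 - Real.log t) / (t - 1) ^ 2) t := by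
  have h1 : HasDerivAt (fun u : ℝ => u * Real.log u) (Real.log t + 1) t := by
    have := (hasDerivAt_id t).mul (Real.hasDerivAt_log ht.ne')
    refine this.congr_deriv ?_
    field_simp
    simp only [id]; ring
  have h2 : HasDerivAt (fun u : ℝ => u - 1) 1 t := (hasDerivAt_id t).sub_const 1
  have h3 := h1.div h2 (sub_ne_zero.mpr ht1)
  refine h3.congr_deriv ?_
  have : (Real.log t + 1) * (t - 1) - t * Real.log t * 1 = t - 1 - Real.log t := by ring
  rw [this]

private lemma aux_log_gt (t : ℝ) (ht : 0 < t) (ht1 : t ≠ 1) :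
    (t - 1) / t < Real.log t := by
  have h := Real.log_lt_sub_one_of_pos (show (0:ℝ) < 1 / t by positivity)
    (by simp [ht.ne']; exact fun h => ht1 (by linarith [h]))
  rw [Real.log_div one_ne_zero ht.ne', Real.log_one] at h
  have : (t - 1) / t = 1 - 1 / t := by field_simp
  linarith [this, h]

private lemma g_mono_Ioo : StrictMonoOn (fun u : ℝ => u * Real.log u / (u - 1)) (Set.Ioo 0 1) := by
  apply strictMonoOn_of_deriv_pos (convex_Ioo 0 1)
  · intro x hx
    exact ((aux_hasDeriv x hx.1 (ne_of_lt hx.2)).differentiableAt.continuousAt).continuousWithinAt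
  · intro x hx
    rw [interior_Ioo] at hx
    rw [(aux_hasDeriv x hx.1 (ne_of_lt hx.2)).deriv]
    have h1 := Real.log_lt_sub_one_of_pos hx.1 (ne_of_lt hx.2)
    have h2 : (0:ℝ) < (x - 1) ^ 2 := by
      have : x - 1 ≠ 0 := sub_ne_zero.mpr (ne_of_lt hx.2)
      positivity
    exact div_pos (by linarith) h2

private lemma g_mono_Ioi : StrictMonoOn (fun u : ℝ => u * Real.log u / (u - 1)) (Set.Ioi 1) := by
  apply strictMonoOn_of_deriv_pos (convex_Ioi 1)
  · intro x hx
    have hx1 : (1:ℝ) < x := hx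
    exact ((aux_hasDeriv x (by linarith) (ne_of_gt hx1)).differentiableAt.continuousAt).continuousWithinAt
  · intro x hx
    rw [interior_Ioi] at hx
    have hx1 : (1:ℝ) < x := hx
    rw [(aux_hasDeriv x (by linarith) (ne_of_gt hx1)).deriv]
    have h1 := Real.log_lt_sub_one_of_pos (show (0:ℝ) < x by linarith) (ne_of_gt hx1)
    have h2 : (0:ℝ) < (x - 1) ^ 2 := by
      have : x - 1 ≠ 0 := sub_ne_zero.mpr (ne_of_gt hx1)
      positivity
    exact div_pos (by linarith) h2

private lemma g_strictMono (t s : ℝ) (ht : 0 < t) (hts : t < s) (ht1 : t ≠ 1) (hs1 : s ≠ 1) :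
    t * Real.log t / (t - 1) < s * Real.log s / (s - 1) := by
  have hs : 0 < s := lt_trans ht hts
  rcases lt_or_gt_of_ne ht1 with htlt | htgt
  · rcases lt_or_gt_of_ne hs1 with hslt | hsgt
    · exact g_mono_Ioo ⟨ht, htlt⟩ ⟨hs, hslt⟩ hts
    · -- t < 1 < s : show g t < 1 < g s
      have hgt : t * Real.log t / (t - 1) < 1 := by
        have hl := aux_log_gt t ht ht1
        have h1 : t - 1 < t * Real.log t := by
          have := (div_lt_iff₀ ht).mp hl
          linarith
        rw [div_lt_one_iff]
        right; right
        exact ⟨by linarith, by linarith⟩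
      have hgs : 1 < s * Real.log s / (s - 1) := by
        have hl := aux_log_gt s hs hs1
        have h1 : s - 1 < s * Real.log s := by
          have := (div_lt_iff₀ hs).mp hl
          linarith
        rw [lt_div_iff₀ (by linarith : (0:ℝ) < s - 1)]
        linarith
      linarith
  · have hsgt : 1 < s := lt_trans htgt hts
    exact g_mono_Ioi htgt hsgt hts

private lemma key_rewrite (a x : ℝ) (ha : 0 < a) (hx : 0 < x) (hne : x ≠ a) :
    a * x / (a - x) * Real.log (a / x) = a * (x / a * Real.log (x / a) / (x / a - 1)) := by
  rw [Real.log_div ha.ne' hx.ne', Real.log_div hx.ne' ha.ne']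
  have h1 : a - x ≠ 0 := sub_ne_zero.mpr (Ne.symm hne)
  have h2 : x / a - 1 ≠ 0 := by
    intro h
    apply hne
    field_simp at h
    linarith
  have h3 : x - a ≠ 0 := sub_ne_zero.mpr hne
  field_simp
  ring

/-- Lemma 1: the equal-prior threshold `Q ↦ Θ̃(P,Q)` is strictly increasing
on `{Q ≥ 0 : Q ≠ P}`. -/
theorem equal_prior_threshold_strictMono
    (γ σ2 : ℝ) (hγ : 0 < γ) (hσ : 0 < σ2) (M : ℕ) (hM : 1 ≤ M)
    (P : ℝ) (hP : 0 < P)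
    (Θ : ℝ → ℝ)
    (hΘ : ∀ Q : ℝ, Θ Q = ((γ * P + σ2) * (γ * Q + σ2) / (γ * (P - Q))) *
        (M * Real.log ((γ * P + σ2) / (γ * Q + σ2)))) :
    ∀ Q Q' : ℝ, 0 ≤ Q → Q < Q' → Q ≠ P → Q' ≠ P → Θ Q < Θ Q' := by
  intro Q Q' hQ0 hQQ' hQP hQ'P
  set a := γ * P + σ2 with ha_def
  have ha : 0 < a := by positivity
  have hx : 0 < γ * Q + σ2 := by positivity
  have hx' : 0 < γ * Q' + σ2 := by nlinarith
  have hxne : γ * Q + σ2 ≠ a := by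
    intro h; apply hQP
    rw [ha_def] at h
    have : γ * Q = γ * P := by linarith
    exact mul_left_cancel₀ hγ.ne' this
  have hx'ne : γ * Q' + σ2 ≠ a := by
    intro h; apply hQ'P
    rw [ha_def] at h
    have : γ * Q' = γ * P := by linarith
    exact mul_left_cancel₀ hγ.ne' this
  have hform : ∀ R : ℝ, 0 < γ * R + σ2 → γ * R + σ2 ≠ a → Θ R = (M : ℝ) *
      (a * ((γ * R + σ2) / a * Real.log ((γ * R + σ2) / a) / ((γ * R + σ2) / a - 1))) := by
    intro R hRpos hRP
    rw [hΘ R]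
    have hsub : γ * (P - R) = a - (γ * R + σ2) := by rw [ha_def]; ring
    rw [hsub]
    have k := key_rewrite a (γ * R + σ2) ha hRpos hRP
    linear_combination (M : ℝ) * k
  rw [hform Q hx hxne, hform Q' hx' hx'ne]
  have hMpos : (0:ℝ) < (M:ℝ) := by exact_mod_cast Nat.lt_of_lt_of_le Nat.zero_lt_one hM
  have ht : 0 < (γ * Q + σ2) / a := div_pos hx ha
  have hts : (γ * Q + σ2) / a < (γ * Q' + σ2) / a :=
    (div_lt_div_iff_of_pos_right ha).mpr (by nlinarith)
  have ht1 : (γ * Q + σ2) / a ≠ 1 := fun h => hxne ((div_eq_one_iff_eq ha.ne').mp h)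
  have ht1' : (γ * Q' + σ2) / a ≠ 1 := fun h => hx'ne ((div_eq_one_iff_eq ha.ne').mp h)
  have hg := g_strictMono _ _ ht hts ht1 ht1'
  have := mul_lt_mul_of_pos_left hg ha
  exact mul_lt_mul_of_pos_left this hMpos
end

section
/- Fix γ > 0, σ² > 0, integer M ≥ 1 and P > 0. For every Q ≥ 0 with Q ≠ P, the function Q ↦ Θ̃(P,Q) is differentiable at Q with derivative (Mγ/z²)·(z − ln(1+z)), where z = γ(Q−P)/(γP+σ²) ∈ (−1, +∞) \ {0}; moreover this derivative is strictly positive. -/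
open Real

/-- the equal-prior threshold `Q ↦ Θ̃(P,Q)` is differentiable at every
`Q ≥ 0`, `Q ≠ P`, with strictly positive derivative `(Mγ/z²)(z − ln(1+z))`,
where `z = γ(Q−P)/(γP+σ²) ∈ (−1,∞) \ {0}`. -/
theorem equal_prior_threshold_hasDerivAt
    (γ σ2 : ℝ) (hγ : 0 < γ) (hσ : 0 < σ2) (M : ℕ) (hM : 1 ≤ M)
    (P : ℝ) (hP : 0 < P)
    (Θ : ℝ → ℝ)
    (hΘ : ∀ Q : ℝ, Θ Q = ((γ * P + σ2) * (γ * Q + σ2) / (γ * (P - Q))) *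
        (M * Real.log ((γ * P + σ2) / (γ * Q + σ2))))
    (Q : ℝ) (hQ : 0 ≤ Q) (hQP : Q ≠ P)
    (z : ℝ) (hz : z = γ * (Q - P) / (γ * P + σ2)) :
    (-1 < z ∧ z ≠ 0) ∧
    HasDerivAt Θ ((M * γ / z ^ 2) * (z - Real.log (1 + z))) Q ∧
    0 < (M * γ / z ^ 2) * (z - Real.log (1 + z)) := by
  have hA : 0 < γ * P + σ2 := by positivity
  have hB : 0 < γ * Q + σ2 := by positivity
  have hBA : γ * Q + σ2 ≠ γ * P + σ2 := by
    intro h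
    exact hQP (by
      have : γ * Q = γ * P := by linarith
      exact mul_left_cancel₀ (ne_of_gt hγ) this)
  have h1z : 1 + z = (γ * Q + σ2) / (γ * P + σ2) := by
    rw [hz]; field_simp; ring
  have hz1 : -1 < z := by
    have : 0 < 1 + z := by rw [h1z]; positivity
    linarith
  have hz0 : z ≠ 0 := by
    rw [hz]
    intro h
    rcases mul_eq_zero.mp ((div_eq_zero_iff.mp h).resolve_right hA.ne') with h | h
    · exact hγ.ne' h
    · exact hQP (by linarith)
  have hvne : γ * (P - Q) ≠ 0 := by
    intro h
    rcases mul_eq_zero.mp h with h | h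
    · exact hγ.ne' h
    · exact hQP (by linarith)
  -- building blocks
  have hBQ : HasDerivAt (fun x => γ * x + σ2) γ Q := by
    simpa using ((hasDerivAt_id Q).const_mul γ).add_const σ2
  have hu : HasDerivAt (fun x => (γ * P + σ2) * (γ * x + σ2)) ((γ * P + σ2) * γ) Q :=
    hBQ.const_mul _
  have hv : HasDerivAt (fun x => γ * (P - x)) (γ * (0 - 1)) Q := by
    exact (((hasDerivAt_const Q P).sub (hasDerivAt_id Q)).const_mul γ)
  have hdiv := hu.div hv hvne
  have hf := (hasDerivAt_const Q (γ * P + σ2)).div hBQ hB.ne'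
  have hfpos : (γ * P + σ2) / (γ * Q + σ2) ≠ 0 := by positivity
  have hlog := hf.log hfpos
  have hmul := hdiv.mul (hlog.const_mul (M : ℝ))
  have hΘeq : Θ = fun x => (γ * P + σ2) * (γ * x + σ2) / (γ * (P - x)) *
      ((M : ℝ) * Real.log ((γ * P + σ2) / (γ * x + σ2))) := by
    funext x; exact hΘ x
  rw [hΘeq]
  have hlogz : Real.log (1 + z) = Real.log (γ * Q + σ2) - Real.log (γ * P + σ2) := by
    rw [h1z, Real.log_div hB.ne' hA.ne']
  have hlogAB : Real.log ((γ * P + σ2) / (γ * Q + σ2)) =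
      Real.log (γ * P + σ2) - Real.log (γ * Q + σ2) :=
    Real.log_div hA.ne' hB.ne'
  refine ⟨⟨hz1, hz0⟩, ?_, ?_⟩
  · refine hmul.congr_deriv ?_
    symm
    simp only [Pi.div_apply]
    rw [hlogz, hlogAB, hz]
    have hz2 : γ * (Q - P) ≠ 0 := by
      intro h; exact hvne (by linarith [h]; )
    field_simp
    ring
  · have hlt : Real.log (1 + z) < z := by
      have h1 : (0:ℝ) < 1 + z := by linarith
      have h2 : 1 + z ≠ 1 := by intro h; exact hz0 (by linarith)
      have := Real.log_lt_sub_one_of_pos h1 h2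
      linarith
    have : 0 < (M : ℝ) * γ / z ^ 2 := by
      have : (1:ℝ) ≤ M := by exact_mod_cast hM
      positivity
    exact mul_pos this (by linarith)
end

section
/- (No mutual masking of non-zero powers under equal priors) Fix γ > 0, σ² > 0, integer M ≥ 1 and strictly increasing positive powers 0 < P_1 < P_2 < ⋯ < P_N. For every i with 1 < i < N, the maximum over 1 ≤ j < i of Θ̃(P_i, P_j) is attained at j = i−1, the minimum over i < j ≤ N of Θ̃(P_i, P_j) is attained at j = i+1, and Θ̃(P_i, P_{i−1}) < Θ̃(P_i, P_{i+1}); hence the decision region of every non-zero power level is a non-empty interval. -/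
open Real

noncomputable def gfun (t : ℝ) : ℝ := t * Real.log t / (t - 1)

lemma key_tlog {t : ℝ} (ht : 0 < t) (hne : t ≠ 1) : t - 1 < t * Real.log t := by
  have h1 : (0:ℝ) < t⁻¹ := inv_pos.mpr ht
  have h2 : t⁻¹ ≠ 1 := by
    intro h; apply hne; rwa [inv_eq_one] at h
  have h3 := Real.log_lt_sub_one_of_pos h1 h2
  rw [Real.log_inv] at h3
  have h4 : t * t⁻¹ = 1 := mul_inv_cancel₀ ht.ne'
  nlinarith [mul_lt_mul_of_pos_left h3 ht, h4]

lemma hasDerivAt_gfun {t : ℝ} (ht : 0 < t) (hne : t ≠ 1) :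
    HasDerivAt gfun ((t - 1 - Real.log t) / (t - 1) ^ 2) t := by
  have h1 : HasDerivAt (fun t : ℝ => t * Real.log t) (Real.log t + 1) t := by
    have := (hasDerivAt_id t).fun_mul (Real.hasDerivAt_log ht.ne')
    refine this.congr_deriv ?_
    simp only [id]
    field_simp
  have h2 : HasDerivAt (fun t : ℝ => t - 1) 1 t := (hasDerivAt_id t).sub_const 1
  have hne' : t - 1 ≠ 0 := sub_ne_zero.mpr hne
  have := h1.fun_div h2 hne'
  refine this.congr_deriv ?_
  field_simp
  ring

lemma deriv_gfun_pos {t : ℝ} (ht : 0 < t) (hne : t ≠ 1) :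
    0 < deriv gfun t := by
  rw [(hasDerivAt_gfun ht hne).deriv]
  have h1 : Real.log t < t - 1 := Real.log_lt_sub_one_of_pos ht hne
  have h2 : (0:ℝ) < (t - 1) ^ 2 := by
    have : t - 1 ≠ 0 := sub_ne_zero.mpr hne
    positivity
  apply div_pos (by linarith) h2

lemma gfun_mono_Ioo : StrictMonoOn gfun (Set.Ioo (0:ℝ) 1) := by
  apply strictMonoOn_of_deriv_pos (convex_Ioo 0 1)
  · intro x hx
    exact (hasDerivAt_gfun hx.1 (ne_of_lt hx.2)).continuousAt.continuousWithinAt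
  · rw [interior_Ioo]
    intro x hx
    exact deriv_gfun_pos hx.1 (ne_of_lt hx.2)

lemma gfun_mono_Ioi : StrictMonoOn gfun (Set.Ioi (1:ℝ)) := by
  apply strictMonoOn_of_deriv_pos (convex_Ioi 1)
  · intro x hx
    exact (hasDerivAt_gfun (lt_trans one_pos hx) (ne_of_gt hx)).continuousAt.continuousWithinAt
  · rw [interior_Ioi]
    intro x hx
    exact deriv_gfun_pos (lt_trans one_pos hx) (ne_of_gt hx)

lemma gfun_lt_one {t : ℝ} (ht : 0 < t) (h : t < 1) : gfun t < 1 := by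
  have hk := key_tlog ht (ne_of_lt h)
  have hc : t - 1 < 0 := by linarith
  unfold gfun
  rw [div_lt_one_of_neg hc]
  linarith

lemma one_lt_gfun {t : ℝ} (h : 1 < t) : 1 < gfun t := by
  have hk := key_tlog (lt_trans one_pos h) (ne_of_gt h)
  have hc : 0 < t - 1 := by linarith
  unfold gfun
  rw [lt_div_iff₀ hc]
  linarith

lemma gfun_lt {s t : ℝ} (hs : 0 < s) (hst : s < t) (hsne : s ≠ 1) (htne : t ≠ 1) :
    gfun s < gfun t := by
  rcases lt_or_gt_of_ne htne with h | h
  · exact gfun_mono_Ioo ⟨hs, lt_of_le_of_ne (le_of_lt (lt_trans hst h)) hsne⟩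
      ⟨lt_trans hs hst, h⟩ hst
  · rcases lt_or_gt_of_ne hsne with h' | h'
    · exact lt_trans (gfun_lt_one hs h') (one_lt_gfun h)
    · exact gfun_mono_Ioi h' h hst

lemma gdiv (a b : ℝ) (ha : 0 < a) (hb : 0 < b) (hne : b ≠ a) :
    a * b * Real.log (a / b) / (a - b) = a * gfun (b / a) := by
  have hlog : Real.log (b / a) = - Real.log (a / b) := by
    rw [← Real.log_inv]; congr 1; rw [inv_div]
  unfold gfun
  rw [hlog]
  have h1 : a - b ≠ 0 := sub_ne_zero.mpr (Ne.symm hne)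
  have h2 : b - a ≠ 0 := sub_ne_zero.mpr hne
  have h3 : b / a - 1 = (b - a) / a := by field_simp
  rw [h3]
  field_simp
  ring

/-- under equal priors, for an interior power level `P i` (`1 < i < N`),
the lower bound of its decision region `max_{1 ≤ j < i} Θ̃(P_i,P_j)` is attained at
`j = i−1`, the upper bound `min_{i < j ≤ N} Θ̃(P_i,P_j)` is attained at `j = i+1`,
and the lower bound is strictly below the upper bound: no mutual masking of
non-zero power levels. -/
theorem no_mutual_masking_equal_priors
    (γ σ2 : ℝ) (hγ : 0 < γ) (hσ : 0 < σ2) (M : ℕ) (hM : 1 ≤ M)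
    (N : ℕ) (P : ℕ → ℝ)
    (hPpos : ∀ i, 1 ≤ i → i ≤ N → 0 < P i)
    (hPmono : ∀ i j, 1 ≤ i → i < j → j ≤ N → P i < P j)
    (Θ : ℝ → ℝ → ℝ)
    (hΘ : ∀ p q : ℝ, Θ p q = ((γ * p + σ2) * (γ * q + σ2) / (γ * (p - q))) *
        (M * Real.log ((γ * p + σ2) / (γ * q + σ2))))
    (i : ℕ) (hi1 : 1 < i) (hiN : i < N) :
    (∀ j, 1 ≤ j → j < i → Θ (P i) (P j) ≤ Θ (P i) (P (i - 1))) ∧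
    (∀ j, i < j → j ≤ N → Θ (P i) (P (i + 1)) ≤ Θ (P i) (P j)) ∧
    Θ (P i) (P (i - 1)) < Θ (P i) (P (i + 1)) := by
  set a : ℝ := γ * P i + σ2 with ha_def
  have hPi : 0 < P i := hPpos i (by omega) (by omega)
  have ha : 0 < a := by positivity
  -- rewrite Θ in terms of gfun
  have hrw : ∀ q : ℝ, 0 < q → q ≠ P i →
      Θ (P i) q = M * (a * gfun ((γ * q + σ2) / a)) := by
    intro q hq hqne
    have hb : 0 < γ * q + σ2 := by positivity
    have hbne : γ * q + σ2 ≠ a := by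
      intro h; apply hqne
      rw [ha_def] at h
      have : γ * q = γ * P i := by linarith
      exact mul_left_cancel₀ hγ.ne' this
    rw [hΘ, ← gdiv a (γ * q + σ2) ha hb hbne]
    have hab : γ * (P i - q) = a - (γ * q + σ2) := by rw [ha_def]; ring
    rw [hab]
    ring
  -- strict comparison lemma
  have hcomp : ∀ q q' : ℝ, 0 < q → q < q' → q ≠ P i → q' ≠ P i →
      Θ (P i) q < Θ (P i) q' := by
    intro q q' hq hqq' hqne hq'ne
    have hq' : 0 < q' := lt_trans hq hqq'
    rw [hrw q hq hqne, hrw q' hq' hq'ne]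
    have hb : 0 < γ * q + σ2 := by positivity
    have hs : (0:ℝ) < (γ * q + σ2) / a := by positivity
    have hst : (γ * q + σ2) / a < (γ * q' + σ2) / a := by
      gcongr
    have hsne : (γ * q + σ2) / a ≠ 1 := by
      intro h
      rw [div_eq_one_iff_eq ha.ne'] at h
      apply hqne
      rw [ha_def] at h
      have : γ * q = γ * P i := by linarith
      exact mul_left_cancel₀ hγ.ne' this
    have htne : (γ * q' + σ2) / a ≠ 1 := by
      intro h
      rw [div_eq_one_iff_eq ha.ne'] at h
      apply hq'ne
      rw [ha_def] at h
      have : γ * q' = γ * P i := by linarith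
      exact mul_left_cancel₀ hγ.ne' this
    have hg := gfun_lt hs hst hsne htne
    have hMpos : (0:ℝ) < (M:ℝ) := by
      have : (1:ℝ) ≤ (M:ℝ) := by exact_mod_cast hM
      linarith
    exact mul_lt_mul_of_pos_left (mul_lt_mul_of_pos_left hg ha) hMpos
  have hPim : 0 < P (i-1) := hPpos (i-1) (by omega) (by omega)
  have hPltm : P (i-1) < P i := hPmono (i-1) i (by omega) (by omega) (by omega)
  have hPltp : P i < P (i+1) := hPmono i (i+1) (by omega) (by omega) (by omega)
  refine ⟨?_, ?_, ?_⟩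
  · intro j hj1 hji
    rcases eq_or_lt_of_le (show j ≤ i - 1 by omega) with h | h
    · rw [h]
    · have h1 : P j < P (i-1) := hPmono j (i-1) hj1 (by omega) (by omega)
      have h2 : P j < P i := hPmono j i hj1 (by omega) (by omega)
      exact le_of_lt (hcomp (P j) (P (i-1)) (hPpos j (by omega) (by omega)) h1
        (ne_of_lt h2) (ne_of_lt hPltm))
  · intro j hij hjN
    rcases eq_or_lt_of_le (show i + 1 ≤ j by omega) with h | h
    · rw [← h]
    · have h1 : P (i+1) < P j := hPmono (i+1) j (by omega) (by omega) (by omega)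
      have h2 : P i < P j := hPmono i j (by omega) (by omega) (by omega)
      exact le_of_lt (hcomp (P (i+1)) (P j) (by linarith) h1
        (ne_of_gt hPltp) (ne_of_gt h2))
  · exact hcomp (P (i-1)) (P (i+1)) hPim (by linarith)
      (ne_of_lt hPltm) (ne_of_gt hPltp)
end

section
/- (Lemma 2) Fix γ > 0, σ² > 0, integer M ≥ 1, powers P_1,…,P_N > 0, priors q_0 > 0 and q_1,…,q_N ≥ 0, an index j₀ ∈ {1,…,N} with q_{j₀} > 0, and suppose there exists i ∈ {1,…,N} with i ≠ j₀ and q_i > 0. Let θ* satisfy Φ(θ*) = 0 and let φ = (σ²(γP_{j₀}+σ²)/(γP_{j₀})) · ln( (q_0/q_{j₀}) · (γP_{j₀}/σ² + 1)^M ). Then φ > θ*; that is, the on/off threshold of sensing strategy II strictly exceeds the on/off threshold of sensing strategy I. -/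
open Finset Real

/-- Lemma 2: the on/off threshold `φ` of sensing strategy II strictly
exceeds the on/off threshold `θ*` of sensing strategy I. -/
theorem phi_on_off_gt_theta_on_off
    (γ σ2 : ℝ) (hγ : 0 < γ) (hσ : 0 < σ2) (M : ℕ) (hM : 1 ≤ M)
    (N : ℕ) (P : Fin N → ℝ) (hP : ∀ i, 0 < P i)
    (q0 : ℝ) (hq0 : 0 < q0) (q : Fin N → ℝ) (hq : ∀ i, 0 ≤ q i)
    (j0 : Fin N) (hqj0 : 0 < q j0)
    (hother : ∃ i : Fin N, i ≠ j0 ∧ 0 < q i)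
    (Φ : ℝ → ℝ)
    (hΦ : ∀ θ : ℝ, Φ θ = (∑ i, q i * (σ2 / (γ * P i + σ2)) ^ M *
        Real.exp (γ * P i * θ / (σ2 * (γ * P i + σ2)))) - q0)
    (θstar : ℝ) (hθstar : Φ θstar = 0)
    (φ : ℝ)
    (hφ : φ = (σ2 * (γ * P j0 + σ2) / (γ * P j0)) *
        Real.log ((q0 / q j0) * (γ * P j0 / σ2 + 1) ^ M)) :
    θstar < φ := by
  by_contra hcon
  push_neg at hcon
  obtain ⟨i, hij, hqi⟩ := hother
  have hden : ∀ k : Fin N, 0 < γ * P k + σ2 := fun k => by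
    have := hP k; positivity
  set f : ℝ → Fin N → ℝ := fun θ k =>
    q k * (σ2 / (γ * P k + σ2)) ^ M *
      Real.exp (γ * P k * θ / (σ2 * (γ * P k + σ2))) with hf
  have hnonneg : ∀ θ (k : Fin N), 0 ≤ f θ k := by
    intro θ k
    have h1 := hq k
    have h2 := hden k
    have := Real.exp_pos (γ * P k * θ / (σ2 * (γ * P k + σ2)))
    positivity
  -- value of the j0-th term at φ
  have hj0 : f φ j0 = q0 := by
    have hPj := hP j0
    have hdj := hden j0
    have harg : (γ * P j0) * φ / (σ2 * (γ * P j0 + σ2)) =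
        Real.log ((q0 / q j0) * (γ * P j0 / σ2 + 1) ^ M) := by
      rw [hφ]
      field_simp
    have hxpos : 0 < (q0 / q j0) * (γ * P j0 / σ2 + 1) ^ M := by positivity
    simp only [hf]
    rw [harg, Real.exp_log hxpos]
    have hbase : σ2 / (γ * P j0 + σ2) * (γ * P j0 / σ2 + 1) = 1 := by
      field_simp
    have : (σ2 / (γ * P j0 + σ2)) ^ M * (γ * P j0 / σ2 + 1) ^ M = 1 := by
      rw [← mul_pow, hbase, one_pow]
    field_simp
    rw [show (γ * P j0 + σ2) / σ2 = γ * P j0 / σ2 + 1 by rw [add_div, div_self hσ.ne']]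
    exact this
  -- the i-th term at φ is positive
  have hipos : 0 < f φ i := by
    have h2 := hden i
    have := Real.exp_pos (γ * P i * φ / (σ2 * (γ * P i + σ2)))
    simp only [hf]
    positivity
  -- Φ φ > 0
  have hsum : q0 < ∑ k, f φ k := by
    have hsub : ({i, j0} : Finset (Fin N)) ⊆ Finset.univ := Finset.subset_univ _
    have h2 : ∑ k ∈ ({i, j0} : Finset (Fin N)), f φ k ≤ ∑ k, f φ k :=
      Finset.sum_le_sum_of_subset_of_nonneg hsub (fun k _ _ => hnonneg φ k)
    rw [Finset.sum_pair hij] at h2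
    rw [hj0] at h2
    linarith
  have hΦφ : 0 < Φ φ := by
    rw [hΦ φ]
    have : (∑ k, f φ k) = ∑ k, q k * (σ2 / (γ * P k + σ2)) ^ M *
        Real.exp (γ * P k * φ / (σ2 * (γ * P k + σ2))) := rfl
    linarith [hsum]
  -- monotonicity: Φ φ ≤ Φ θstar
  have hmono : Φ φ ≤ Φ θstar := by
    rw [hΦ φ, hΦ θstar]
    apply sub_le_sub_right
    apply Finset.sum_le_sum
    intro k _
    have h2 := hden k
    have hcoef : (0:ℝ) ≤ q k * (σ2 / (γ * P k + σ2)) ^ M := by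
      have := hq k; positivity
    apply mul_le_mul_of_nonneg_left _ hcoef
    apply Real.exp_le_exp.2
    apply div_le_div_of_nonneg_right _ (by positivity)
    have := hP k
    nlinarith [mul_le_mul_of_nonneg_left hcon (le_of_lt (mul_pos hγ (hP k)))]
  linarith [hθstar ▸ hmono, hΦφ]
end

section
/- (Theorem 2, enumeration of the majority decision set) Let K ≥ 1, N ≥ 1 be integers and j ∈ {1,…,N}. For d : {0,1,…,N} → ℕ with Σ_{n=0}^N d_n = K, the following are equivalent: (i) 2d_0 ≤ K, d_n ≤ d_j for all 1 ≤ n < j, and d_n < d_j for all j < n ≤ N; (ii) d_0 ≤ ⌊K/2⌋, ⌈(K−d_0)/N⌉ ≤ d_j ≤ K−d_0, and for every n ∈ {1,…,N} with n ≠ j: max{0, α_n} ≤ d_n ≤ min{d_j, β_n} if n < j, and max{0, α_n} ≤ d_n ≤ min{d_j − 1, β_n} if n > j, where α_n = K − Σ_{i=0}^{n−1} d_i − (N−n)d_j + (N−j) for n < j, α_n = K − Σ_{i=0}^{n−1} d_i − (N−n)d_j + (N−n) for n > j, β_n = K − Σ_{i=0}^{n−1} d_i − d_j for n < j, and β_n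 = K − Σ_{i=0}^{n−1} d_i for n > j. -/
open Finset

/-- Theorem 2: a voting pool `d` summing to `K` yields the majority fusion
decision `H j` (presence declared, `d j` maximal among non-zero levels with ties broken
towards the largest index) iff its components lie in the nested summation ranges given by
`α` and `β`. -/
theorem majority_decision_set_enumeration
    (K N : ℕ) (hK : 1 ≤ K) (hN : 1 ≤ N)
    (j : ℕ) (hj1 : 1 ≤ j) (hjN : j ≤ N)
    (d : ℕ → ℕ) (hsum : ∑ n ∈ Finset.range (N + 1), d n = K)
    (α β : ℕ → ℤ)
    (hα : ∀ n, α n =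
      if n < j then
        (K : ℤ) - (∑ i ∈ Finset.range n, (d i : ℤ)) - ((N : ℤ) - n) * (d j : ℤ)
          + ((N : ℤ) - j)
      else
        (K : ℤ) - (∑ i ∈ Finset.range n, (d i : ℤ)) - ((N : ℤ) - n) * (d j : ℤ)
          + ((N : ℤ) - n))
    (hβ : ∀ n, β n =
      if n < j then (K : ℤ) - (∑ i ∈ Finset.range n, (d i : ℤ)) - (d j : ℤ)
      else (K : ℤ) - (∑ i ∈ Finset.range n, (d i : ℤ))) :
    ((2 * d 0 ≤ K ∧ (∀ n, 1 ≤ n → n < j → d n ≤ d j) ∧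
        (∀ n, j < n → n ≤ N → d n < d j))
      ↔
     (d 0 ≤ K / 2 ∧
      ⌈((K : ℚ) - (d 0 : ℚ)) / (N : ℚ)⌉ ≤ (d j : ℤ) ∧ d j ≤ K - d 0 ∧
      (∀ n, 1 ≤ n → n < j →
        max 0 (α n) ≤ (d n : ℤ) ∧ (d n : ℤ) ≤ min (d j : ℤ) (β n)) ∧
      (∀ n, j < n → n ≤ N →
        max 0 (α n) ≤ (d n : ℤ) ∧ (d n : ℤ) ≤ min ((d j : ℤ) - 1) (β n)))) := by

  have hK2 : d 0 ≤ K / 2 ↔ 2 * d 0 ≤ K := by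
    rw [Nat.le_div_iff_mul_le (by norm_num : 0 < 2)]; omega
  -- split-sum lemma
  have hsplit : ∀ n, n ≤ N + 1 →
      (∑ i ∈ Finset.range n, d i) + ∑ i ∈ Finset.Ico n (N + 1), d i = K := by
    intro n hn
    rw [Finset.range_eq_Ico, Finset.sum_Ico_consecutive _ (Nat.zero_le n) hn,
      ← Finset.range_eq_Ico, hsum]
  constructor
  · rintro ⟨h0, hlt, hgt⟩
    have hdj : ∀ n ∈ Finset.Ico 1 (N + 1), d n ≤ d j := by
      intro n hn
      simp only [Finset.mem_Ico] at hn
      rcases lt_trichotomy n j with h | h | h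
      · exact hlt n hn.1 h
      · exact h ▸ le_rfl
      · exact (hgt n h (by omega)).le
    have hdj1 : ∀ n ∈ Finset.Ico (j + 1) (N + 1), d n + 1 ≤ d j := by
      intro n hn
      simp only [Finset.mem_Ico] at hn
      exact hgt n (by omega) (by omega)
    refine ⟨hK2.mpr h0, ?_, ?_, ?_, ?_⟩
    · -- ceiling bound
      have h1 := hsplit 1 (by omega)
      have h2 : ∑ i ∈ Finset.Ico 1 (N + 1), d i ≤ N * d j := by
        calc ∑ i ∈ Finset.Ico 1 (N + 1), d i ≤ (Finset.Ico 1 (N + 1)).card • d j :=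
              Finset.sum_le_card_nsmul _ _ _ hdj
          _ = N * d j := by simp [Nat.card_Ico]
      have hK' : K ≤ d 0 + N * d j := by
        simp [Finset.sum_range_one] at h1; omega
      rw [Int.ceil_le]
      rw [div_le_iff₀ (by positivity : (0 : ℚ) < (N : ℚ))]
      have hQ : (K : ℚ) ≤ (d 0 : ℚ) + (N : ℚ) * (d j : ℚ) := by exact_mod_cast hK'
      push_cast
      nlinarith [hQ]
    · -- d j ≤ K - d 0
      have hsub : ({0, j} : Finset ℕ) ⊆ Finset.range (N + 1) := by
        intro x hx
        simp only [Finset.mem_insert, Finset.mem_singleton] at hx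
        rcases hx with rfl | rfl <;> simp [Finset.mem_range] <;> omega
      have := Finset.sum_le_sum_of_subset hsub (f := d)
      rw [Finset.sum_pair (by omega : (0 : ℕ) ≠ j), hsum] at this
      omega
    · -- n < j bounds
      intro n hn1 hnj
      have hnN : n ≤ N := by omega
      have hs1 := hsplit (n + 1) (by omega)
      rw [Finset.sum_range_succ] at hs1
      -- split the tail at j+1
      have htail : ∑ i ∈ Finset.Ico (n + 1) (j + 1), d i
          + ∑ i ∈ Finset.Ico (j + 1) (N + 1), d i
          = ∑ i ∈ Finset.Ico (n + 1) (N + 1), d i :=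
        Finset.sum_Ico_consecutive _ (by omega) (by omega)
      have hb1 : ∑ i ∈ Finset.Ico (n + 1) (j + 1), d i ≤ (j - n) * d j := by
        calc ∑ i ∈ Finset.Ico (n + 1) (j + 1), d i
            ≤ (Finset.Ico (n + 1) (j + 1)).card • d j := by
              refine Finset.sum_le_card_nsmul _ _ _ ?_
              intro x hx
              refine hdj x ?_
              simp only [Finset.mem_Ico] at hx ⊢
              omega
          _ = (j - n) * d j := by simp [Nat.card_Ico]
      have hb2 : (∑ i ∈ Finset.Ico (j + 1) (N + 1), d i) + (N - j) ≤ (N - j) * d j := by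
        have : ∑ i ∈ Finset.Ico (j + 1) (N + 1), (d i + 1) ≤ (N - j) * d j := by
          calc ∑ i ∈ Finset.Ico (j + 1) (N + 1), (d i + 1)
              ≤ (Finset.Ico (j + 1) (N + 1)).card • d j :=
                Finset.sum_le_card_nsmul _ _ _ (fun x hx => hdj1 x hx)
            _ = (N - j) * d j := by simp [Nat.card_Ico]
        rw [Finset.sum_add_distrib, Finset.sum_const, Nat.card_Ico, smul_eq_mul,
          mul_one, Nat.succ_sub_succ] at this
        exact this
      have hbig : (∑ i ∈ Finset.Ico (n + 1) (N + 1), d i) + (N - j) ≤ (N - n) * d j := by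
        have hadd : (j - n) + (N - j) = N - n := by omega
        calc (∑ i ∈ Finset.Ico (n + 1) (N + 1), d i) + (N - j)
            ≤ (j - n) * d j + (N - j) * d j := by omega
          _ = (N - n) * d j := by rw [← add_mul, hadd]
      -- the key value of the tail containing j
      have hjin : (j : ℕ) ∈ Finset.Ico (n + 1) (N + 1) := by
        simp only [Finset.mem_Ico]; omega
      have hdjle : d j ≤ ∑ i ∈ Finset.Ico (n + 1) (N + 1), d i :=
        Finset.single_le_sum (fun i _ => Nat.zero_le _) hjin
      rw [hα n, hβ n, if_pos hnj, if_pos hnj]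
      constructor
      · rw [max_le_iff]
        refine ⟨by positivity, ?_⟩
        have hc1 : ((∑ i ∈ Finset.range n, d i : ℕ) : ℤ)
            = ∑ i ∈ Finset.range n, (d i : ℤ) := by push_cast; ring
        have hc2 : ((N - n : ℕ) : ℤ) = (N : ℤ) - n := by omega
        have hc3 : ((N - j : ℕ) : ℤ) = (N : ℤ) - j := by omega
        have hs1' : ((∑ i ∈ Finset.range n, d i : ℕ) : ℤ) + (d n : ℤ)
            + ((∑ i ∈ Finset.Ico (n + 1) (N + 1), d i : ℕ) : ℤ) = K := by
          exact_mod_cast congrArg (Nat.cast : ℕ → ℤ) hs1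
        have hbig' : ((∑ i ∈ Finset.Ico (n + 1) (N + 1), d i : ℕ) : ℤ) + ((N : ℤ) - j)
            ≤ ((N : ℤ) - n) * (d j : ℤ) := by
          rw [← hc2, ← hc3]
          exact_mod_cast hbig
        rw [← hc1]
        linarith
      · rw [le_min_iff]
        refine ⟨by exact_mod_cast hlt n hn1 hnj, ?_⟩
        have hs1' : ((∑ i ∈ Finset.range n, d i : ℕ) : ℤ) + (d n : ℤ)
            + ((∑ i ∈ Finset.Ico (n + 1) (N + 1), d i : ℕ) : ℤ) = K := by
          exact_mod_cast congrArg (Nat.cast : ℕ → ℤ) hs1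
        have hdjle' : (d j : ℤ) ≤ ((∑ i ∈ Finset.Ico (n + 1) (N + 1), d i : ℕ) : ℤ) := by
          exact_mod_cast hdjle
        have hc1 : ((∑ i ∈ Finset.range n, d i : ℕ) : ℤ)
            = ∑ i ∈ Finset.range n, (d i : ℤ) := by push_cast; ring
        rw [← hc1]
        linarith
    · -- n > j bounds
      intro n hjn hnN
      have hnj' : ¬ n < j := by omega
      have hs1 := hsplit (n + 1) (by omega)
      rw [Finset.sum_range_succ] at hs1
      have hb2 : (∑ i ∈ Finset.Ico (n + 1) (N + 1), d i) + (N - n) ≤ (N - n) * d j := by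
        have : ∑ i ∈ Finset.Ico (n + 1) (N + 1), (d i + 1) ≤ (N - n) * d j := by
          calc ∑ i ∈ Finset.Ico (n + 1) (N + 1), (d i + 1)
              ≤ (Finset.Ico (n + 1) (N + 1)).card • d j := by
                refine Finset.sum_le_card_nsmul _ _ _ ?_
                intro x hx
                refine hdj1 x ?_
                simp only [Finset.mem_Ico] at hx ⊢
                omega
            _ = (N - n) * d j := by simp [Nat.card_Ico]
        rw [Finset.sum_add_distrib, Finset.sum_const, Nat.card_Ico, smul_eq_mul,
          mul_one, Nat.succ_sub_succ] at this
        exact this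
      rw [hα n, hβ n, if_neg hnj', if_neg hnj']
      have hc1 : ((∑ i ∈ Finset.range n, d i : ℕ) : ℤ)
          = ∑ i ∈ Finset.range n, (d i : ℤ) := by push_cast; ring
      have hc2 : ((N - n : ℕ) : ℤ) = (N : ℤ) - n := by omega
      have hs1' : ((∑ i ∈ Finset.range n, d i : ℕ) : ℤ) + (d n : ℤ)
          + ((∑ i ∈ Finset.Ico (n + 1) (N + 1), d i : ℕ) : ℤ) = K := by
        exact_mod_cast congrArg (Nat.cast : ℕ → ℤ) hs1
      have hb2' : ((∑ i ∈ Finset.Ico (n + 1) (N + 1), d i : ℕ) : ℤ) + ((N : ℤ) - n)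
          ≤ ((N : ℤ) - n) * (d j : ℤ) := by
        rw [← hc2]; exact_mod_cast hb2
      have htpos : (0 : ℤ) ≤ ((∑ i ∈ Finset.Ico (n + 1) (N + 1), d i : ℕ) : ℤ) := by
        positivity
      constructor
      · rw [max_le_iff]
        refine ⟨by positivity, ?_⟩
        rw [← hc1]; linarith
      · rw [le_min_iff]
        constructor
        · have := hgt n hjn hnN
          omega
        · rw [← hc1]; linarith
  · rintro ⟨h0, -, -, hlo, hhi⟩
    refine ⟨hK2.mp h0, ?_, ?_⟩
    · intro n h1 h2
      have := (hlo n h1 h2).2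
      rw [le_min_iff] at this
      exact_mod_cast this.1
    · intro n h1 h2
      have := (hhi n h1 h2).2
      rw [le_min_iff] at this
      have h3 := this.1
      omega
end

section
/- Fix γ > 0, σ² > 0, integer M ≥ 1, powers P_1,…,P_N > 0 and priors q_0 > 0, q_1,…,q_N ≥ 0 with q_i > 0 for at least one i, and let θ* satisfy Φ(θ*) = 0. Then for every observation x ∈ ℂ^M with received energy y(x) = Σ_{l=1}^M |x_l|², the MAP on/off comparison Σ_{i=1}^N q_i·p_{P_i}(x) > q_0·p_0(x) holds if and only if y(x) > θ*; i.e., the first stage of sensing strategy I is exactly the energy detector with threshold θ_on/off. -/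
open Finset Real

/-- the first stage of sensing strategy I (the MAP on/off test) is exactly
the energy detector with threshold `θ* = θ_on/off`, the root of `Φ`. -/
theorem on_off_map_is_energy_detector
    (γ σ2 : ℝ) (hγ : 0 < γ) (hσ : 0 < σ2) (M : ℕ) (hM : 1 ≤ M)
    (N : ℕ) (P : Fin N → ℝ) (hP : ∀ i, 0 < P i)
    (q0 : ℝ) (hq0 : 0 < q0) (q : Fin N → ℝ) (hq : ∀ i, 0 ≤ q i)
    (hqpos : ∃ i, 0 < q i)
    (Φ : ℝ → ℝ)
    (hΦ : ∀ θ : ℝ, Φ θ = (∑ i, q i * (σ2 / (γ * P i + σ2)) ^ M *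
        Real.exp (γ * P i * θ / (σ2 * (γ * P i + σ2)))) - q0)
    (θstar : ℝ) (hθstar : Φ θstar = 0)
    (p : ℝ → (Fin M → ℂ) → ℝ)
    (hp : ∀ (P' : ℝ) (x : Fin M → ℂ), p P' x = ∏ l, ((Real.pi * (γ * P' + σ2))⁻¹ *
        Real.exp (-(‖x l‖) ^ 2 / (γ * P' + σ2))))
    (y : (Fin M → ℂ) → ℝ) (hy : ∀ x, y x = ∑ l, (‖x l‖) ^ 2)
    (x : Fin M → ℂ) :
    ((∑ i, q i * p (P i) x) > q0 * p 0 x ↔ y x > θstar) := by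
  have hπ := Real.pi_pos
  have hD : ∀ i, 0 < γ * P i + σ2 := fun i => by
    have := hP i; positivity
  -- closed form for p
  have hpform : ∀ P', 0 < γ * P' + σ2 →
      p P' x = ((Real.pi * (γ * P' + σ2))⁻¹) ^ M * Real.exp (-(y x) / (γ * P' + σ2)) := by
    intro P' hD'
    rw [hp, hy, Finset.prod_mul_distrib, Finset.prod_const, ← Real.exp_sum,
      Finset.card_univ, Fintype.card_fin]
    congr 1
    simp [neg_div, Finset.sum_div]
  have hp0 : p 0 x = ((Real.pi * σ2)⁻¹) ^ M * Real.exp (-(y x) / σ2) := by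
    have := hpform 0 (by linarith)
    simpa using this
  have hp0pos : 0 < p 0 x := by
    rw [hp0]; positivity
  -- coefficients
  set a : Fin N → ℝ := fun i => γ * P i / (σ2 * (γ * P i + σ2)) with ha
  set c : Fin N → ℝ := fun i => q i * (σ2 / (γ * P i + σ2)) ^ M with hc
  have hapos : ∀ i, 0 < a i := fun i => by
    have := hP i; have := hD i
    apply div_pos (by positivity) (by positivity)
  have hcnn : ∀ i, 0 ≤ c i := fun i => by
    have := hD i
    exact mul_nonneg (hq i) (by positivity)
  set f : ℝ → ℝ := fun t => ∑ i, c i * Real.exp (a i * t) with hf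
  -- rewrite each term
  have hterm : ∀ i, q i * p (P i) x = c i * Real.exp (a i * y x) * p 0 x := by
    intro i
    have hDi := hD i
    have hDne : γ * P i + σ2 ≠ 0 := ne_of_gt hDi
    have hσne : σ2 ≠ 0 := ne_of_gt hσ
    have hexp : Real.exp (a i * y x) * Real.exp (-(y x) / σ2)
        = Real.exp (-(y x) / (γ * P i + σ2)) := by
      rw [← Real.exp_add]
      congr 1
      rw [ha]
      field_simp
      ring
    have hcoef : ((Real.pi * (γ * P i + σ2))⁻¹) ^ M
        = (σ2 / (γ * P i + σ2)) ^ M * ((Real.pi * σ2)⁻¹) ^ M := by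
      rw [← mul_pow]
      congr 1
      field_simp
    rw [hpform (P i) hDi, hp0, hcoef, hc]
    calc q i * ((σ2 / (γ * P i + σ2)) ^ M * ((Real.pi * σ2)⁻¹) ^ M *
            Real.exp (-(y x) / (γ * P i + σ2)))
        = q i * (σ2 / (γ * P i + σ2)) ^ M *
            (Real.exp (a i * y x) * Real.exp (-(y x) / σ2)) * ((Real.pi * σ2)⁻¹) ^ M := by
          rw [hexp]; ring
      _ = q i * (σ2 / (γ * P i + σ2)) ^ M * Real.exp (a i * y x) *
            (((Real.pi * σ2)⁻¹) ^ M * Real.exp (-(y x) / σ2)) := by ring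
  have hsum : (∑ i, q i * p (P i) x) = f (y x) * p 0 x := by
    rw [hf, Finset.sum_mul]
    exact Finset.sum_congr rfl fun i _ => hterm i
  -- f is strictly monotone
  obtain ⟨j, hj⟩ := hqpos
  have hmono : StrictMono f := by
    intro s t hst
    apply Finset.sum_lt_sum
    · intro i _
      exact mul_le_mul_of_nonneg_left
        (Real.exp_le_exp.2 (mul_le_mul_of_nonneg_left hst.le (hapos i).le)) (hcnn i)
    · refine ⟨j, Finset.mem_univ j, ?_⟩
      have hcj : 0 < c j := by
        have := hD j
        exact mul_pos hj (by positivity)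
      exact mul_lt_mul_of_pos_left
        (Real.exp_lt_exp.2 (by nlinarith [hapos j])) hcj
  -- f θstar = q0
  have hroot : f θstar = q0 := by
    have h := hθstar
    rw [hΦ] at h
    have : (∑ i, q i * (σ2 / (γ * P i + σ2)) ^ M *
        Real.exp (γ * P i * θstar / (σ2 * (γ * P i + σ2)))) = q0 := by linarith
    rw [hf, ← this]
    apply Finset.sum_congr rfl
    intro i _
    simp only [hc, ha]
    congr 1
    exact congrArg Real.exp (by ring)
  rw [hsum, gt_iff_lt, mul_lt_mul_iff_of_pos_right hp0pos, ← hroot, gt_iff_lt]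
  exact ⟨fun h => hmono.lt_iff_lt.1 h, fun h => hmono h⟩
end
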